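/- arXiv:1407.5710 — 7 statements merged into one kernel-verified Lean document; each statement's English description precedes it below -/
import Mathlib

section
/- Suppose each value function v i is differentiable on [0, b i] with 0 ≤ v i'(s) ≤ pmax for all s ∈ [0, b i]. If S = (w, s) and S̄ = (w̄, s̄) are positions whose return functions satisfy X_S(p) ≥ X_S̄(p) for every p ∈ Ω, then θ(S) ≤ θ(S̄). -/
open MeasureTheory

noncomputable section

/-- The set of possible price scenarios. -/
abbrev Omega (N : ℕ) (pmax : ℝ) : Type :=
  {p : Fin N → ℝ // ∀ i, 0 ≤ p i ∧ p i ≤ pmax}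

/-- A position `S = (w, s)`: collected revenue `w ≥ 0` and remaining budgets `0 ≤ s i ≤ b i`. -/
def IsPosition (N : ℕ) (b : Fin N → ℝ) (S : ℝ × (Fin N → ℝ)) : Prop :=
  0 ≤ S.1 ∧ ∀ i, 0 ≤ S.2 i ∧ S.2 i ≤ b i

/-- Return function of a position: `X_S(p) = w + ∑ i, p i * s i`. -/
def ret (N : ℕ) (pmax : ℝ) (S : ℝ × (Fin N → ℝ)) (p : Omega N pmax) : ℝ :=
  S.1 + ∑ i, p.1 i * S.2 i

/-- Generating function `θ(S) = -w - ∑ i, v i (s i)`. -/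
def theta (N : ℕ) (v : Fin N → ℝ → ℝ) (S : ℝ × (Fin N → ℝ)) : ℝ :=
  -S.1 - ∑ i, v i (S.2 i)

/-- Risk measure `ρ(X) = inf { θ(S) : S a position with X_S ≤ X pointwise }`, valued
in `ℝ ∪ {+∞}` (the infimum of the empty set is `+∞`). -/
def rho (N : ℕ) (b : Fin N → ℝ) (pmax : ℝ) (v : Fin N → ℝ → ℝ)
    (X : Omega N pmax → ℝ) : EReal :=
  sInf {t : EReal | ∃ S : ℝ × (Fin N → ℝ), IsPosition N b S ∧
    (∀ p, ret N pmax S p ≤ X p) ∧ t = ((theta N v S : ℝ) : EReal)}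

/-- A bounded function on `Ω`. -/
def Bounded (N : ℕ) (pmax : ℝ) (X : Omega N pmax → ℝ) : Prop :=
  ∃ C, ∀ p, |X p| ≤ C

lemma key_lip (B pmax : ℝ) (f : ℝ → ℝ) (f' : ℝ → ℝ)
    (hd : ∀ s ∈ Set.Icc (0:ℝ) B, HasDerivWithinAt f (f' s) (Set.Icc (0:ℝ) B) s)
    (hb : ∀ s ∈ Set.Icc (0:ℝ) B, 0 ≤ f' s ∧ f' s ≤ pmax) :
    ∀ x ∈ Set.Icc (0:ℝ) B, ∀ y ∈ Set.Icc (0:ℝ) B, x ≤ y →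
      0 ≤ f y - f x ∧ f y - f x ≤ pmax * (y - x) := by
  have hconv : Convex ℝ (Set.Icc (0:ℝ) B) := convex_Icc _ _
  have hcont : ContinuousOn f (Set.Icc (0:ℝ) B) := fun s hs =>
    (hd s hs).continuousWithinAt
  have hderivAt : ∀ x ∈ interior (Set.Icc (0:ℝ) B), HasDerivAt f (f' x) x := by
    intro x hx
    have hnb : Set.Icc (0:ℝ) B ∈ nhds x := mem_interior_iff_mem_nhds.mp hx
    exact ((hd x (interior_subset hx)).hasDerivAt hnb)
  have hdiff : DifferentiableOn ℝ f (interior (Set.Icc (0:ℝ) B)) := fun x hx =>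
    (hderivAt x hx).differentiableAt.differentiableWithinAt
  have hderiv_eq : ∀ x ∈ interior (Set.Icc (0:ℝ) B), deriv f x = f' x := fun x hx =>
    (hderivAt x hx).deriv
  intro x hx y hy hxy
  constructor
  · have := hconv.mul_sub_le_image_sub_of_le_deriv hcont hdiff
      (fun z hz => by rw [hderiv_eq z hz]; exact (hb z (interior_subset hz)).1)
      x hx y hy hxy
    nlinarith
  · exact hconv.image_sub_le_mul_sub_of_deriv_le hcont hdiff
      (fun z hz => by rw [hderiv_eq z hz]; exact (hb z (interior_subset hz)).2)
      x hx y hy hxy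

/-- monotonicity of the generating function `θ` under the derivative bounds. -/
theorem stmt0 (N : ℕ) (hN : 1 ≤ N) (b : Fin N → ℝ) (hb : ∀ i, 0 < b i)
    (pmax : ℝ) (hpmax : 0 < pmax)
    (v v' : Fin N → ℝ → ℝ)
    (hderiv : ∀ i, ∀ s ∈ Set.Icc (0:ℝ) (b i),
      HasDerivWithinAt (v i) (v' i s) (Set.Icc (0:ℝ) (b i)) s)
    (hbound : ∀ i, ∀ s ∈ Set.Icc (0:ℝ) (b i), 0 ≤ v' i s ∧ v' i s ≤ pmax)
    (S Sbar : ℝ × (Fin N → ℝ))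
    (hS : IsPosition N b S) (hSbar : IsPosition N b Sbar)
    (hge : ∀ p : Omega N pmax, ret N pmax Sbar p ≤ ret N pmax S p) :
    theta N v S ≤ theta N v Sbar := by
  -- choose the price vector p i = pmax if s i < sbar i else 0
  set w := S.1; set s := S.2; set wb := Sbar.1; set sb := Sbar.2
  classical
  set p : Fin N → ℝ := fun i => if s i < sb i then pmax else 0 with hp
  have hpOm : ∀ i, 0 ≤ p i ∧ p i ≤ pmax := by
    intro i; simp only [hp]
    split <;> constructor <;> first | exact le_refl _ | positivity | exact le_of_lt hpmax
  have hret := hge ⟨p, hpOm⟩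
  simp only [ret] at hret
  -- per-index estimate: v i (sb i) - v i (s i) ≤ p i * (sb i - s i)
  have hterm : ∀ i, v i (sb i) - v i (s i) ≤ p i * sb i - p i * s i := by
    intro i
    have hsi : s i ∈ Set.Icc (0:ℝ) (b i) := ⟨(hS.2 i).1, (hS.2 i).2⟩
    have hsbi : sb i ∈ Set.Icc (0:ℝ) (b i) := ⟨(hSbar.2 i).1, (hSbar.2 i).2⟩
    by_cases h : s i < sb i
    · have := (key_lip (b i) pmax (v i) (v' i) (hderiv i) (hbound i)
        (s i) hsi (sb i) hsbi h.le).2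
      simp only [hp, if_pos h]
      nlinarith
    · push_neg at h
      have := (key_lip (b i) pmax (v i) (v' i) (hderiv i) (hbound i)
        (sb i) hsbi (s i) hsi h).1
      simp only [hp, if_neg (not_lt.mpr h)]
      linarith
  have hsum : ∑ i, (v i (sb i) - v i (s i)) ≤ ∑ i, (p i * sb i - p i * s i) :=
    Finset.sum_le_sum fun i _ => hterm i
  rw [Finset.sum_sub_distrib, Finset.sum_sub_distrib] at hsum
  simp only [theta]
  linarith
end
end

section
/- Suppose each value function v i is differentiable on [0, b i] with 0 ≤ v i'(s) ≤ pmax for all s ∈ [0, b i]. Then for every position S = (w, s), the risk measure agrees with its generating function: ρ(X_S) = θ(S) = -w - ∑ i, v i (s i). -/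
open MeasureTheory

noncomputable section

/-!
The position `S` itself is admissible for `ρ(X_S)`, so `ρ(X_S) ≤ θ(S)`. Conversely, let `T = (w', t)`
be a position with `X_T ≤ X_S` on `Ω`, and evaluate at the price vector `q` with `q i = pmax` where
`t i ≥ s i` and `q i = 0` otherwise. Since `0 ≤ v i' ≤ pmax`, the mean value theorem gives
`v i (t i) - v i (s i) ≤ q i * (t i - s i)` in both cases, and summing against `X_T(q) ≤ X_S(q)`
yields `θ(S) ≤ θ(T)`.
-/

theorem exists_mem_Icc_image_sub_le_mul_sub {D : Set ℝ} {f f' : ℝ → ℝ} {c : ℝ}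
    (hD : Convex ℝ D) (hf : ∀ x ∈ D, HasDerivWithinAt f (f' x) D x)
    (hf' : ∀ x ∈ D, 0 ≤ f' x ∧ f' x ≤ c) {x y : ℝ} (hx : x ∈ D) (hy : y ∈ D) :
    ∃ q ∈ Set.Icc 0 c, f y - f x ≤ q * (y - x) := by
  have hc : 0 ≤ c := (hf' x hx).1.trans (hf' x hx).2
  rcases le_total x y with hxy | hyx
  · refine ⟨c, ⟨hc, le_rfl⟩, ?_⟩
    have hlip := hD.norm_image_sub_le_of_norm_hasDerivWithin_le hf
      (fun z hz => by rw [Real.norm_eq_abs, abs_of_nonneg (hf' z hz).1]; exact (hf' z hz).2) hx hy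
    rw [Real.norm_eq_abs, Real.norm_eq_abs, abs_of_nonneg (sub_nonneg.2 hxy)] at hlip
    exact (le_abs_self _).trans hlip
  · refine ⟨0, ⟨le_rfl, hc⟩, ?_⟩
    have hmono : MonotoneOn f D :=
      monotoneOn_of_hasDerivWithinAt_nonneg hD (fun z hz => (hf z hz).continuousWithinAt)
        (fun z hz => (hf z (interior_subset hz)).mono interior_subset)
        (fun z hz => (hf' z (interior_subset hz)).1)
    simpa using hmono hy hx hyx

section Market

variable {N : ℕ} {b : Fin N → ℝ} {pmax : ℝ} {v v' : Fin N → ℝ → ℝ}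
  (hderiv : ∀ i, ∀ s ∈ Set.Icc (0:ℝ) (b i),
    HasDerivWithinAt (v i) (v' i s) (Set.Icc (0:ℝ) (b i)) s)
  (hbound : ∀ i, ∀ s ∈ Set.Icc (0:ℝ) (b i), 0 ≤ v' i s ∧ v' i s ≤ pmax)
include hderiv hbound

theorem theta_le_of_ret_le {S T : ℝ × (Fin N → ℝ)} (hS : IsPosition N b S)
    (hT : IsPosition N b T) (hle : ∀ p, ret N pmax T p ≤ ret N pmax S p) :
    theta N v S ≤ theta N v T := by
  choose q hq hvq using fun i => exists_mem_Icc_image_sub_le_mul_sub (convex_Icc 0 (b i))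
    (hderiv i) (hbound i) (hS.2 i) (hT.2 i)
  have hret := hle ⟨q, hq⟩
  have hsum : ∑ i, (v i (T.2 i) - v i (S.2 i)) ≤ ∑ i, q i * (T.2 i - S.2 i) :=
    Finset.sum_le_sum fun i _ => hvq i
  simp only [ret, theta, Finset.sum_sub_distrib, mul_sub] at hret hsum ⊢
  linarith

theorem rho_ret {S : ℝ × (Fin N → ℝ)} (hS : IsPosition N b S) :
    rho N b pmax v (ret N pmax S) = theta N v S := by
  refine le_antisymm (sInf_le ⟨S, hS, fun _ => le_rfl, rfl⟩) (le_sInf ?_)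
  rintro _ ⟨T, hT, hle, rfl⟩
  exact EReal.coe_le_coe_iff.2 (theta_le_of_ret_le hderiv hbound hS hT hle)

end Market

theorem stmt3_general (N : ℕ) (b : Fin N → ℝ) (pmax : ℝ)
    (v v' : Fin N → ℝ → ℝ)
    (hderiv : ∀ i, ∀ s ∈ Set.Icc (0:ℝ) (b i),
      HasDerivWithinAt (v i) (v' i s) (Set.Icc (0:ℝ) (b i)) s)
    (hbound : ∀ i, ∀ s ∈ Set.Icc (0:ℝ) (b i), 0 ≤ v' i s ∧ v' i s ≤ pmax)
    (S : ℝ × (Fin N → ℝ)) (hS : IsPosition N b S) :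
    rho N b pmax v (ret N pmax S) = ((theta N v S : ℝ) : EReal) ∧
    theta N v S = -S.1 - ∑ i, v i (S.2 i) :=
  ⟨rho_ret hderiv hbound hS, rfl⟩

/-- on return functions of positions, the risk measure coincides with its
generating function: `ρ(X_S) = θ(S) = -w - ∑ i, v i (s i)`. -/
theorem stmt3 (N : ℕ) (hN : 1 ≤ N) (b : Fin N → ℝ) (hb : ∀ i, 0 < b i)
    (pmax : ℝ) (hpmax : 0 < pmax)
    (v v' : Fin N → ℝ → ℝ)
    (hderiv : ∀ i, ∀ s ∈ Set.Icc (0:ℝ) (b i),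
      HasDerivWithinAt (v i) (v' i s) (Set.Icc (0:ℝ) (b i)) s)
    (hbound : ∀ i, ∀ s ∈ Set.Icc (0:ℝ) (b i), 0 ≤ v' i s ∧ v' i s ≤ pmax)
    (S : ℝ × (Fin N → ℝ)) (hS : IsPosition N b S) :
    rho N b pmax v (ret N pmax S) = ((theta N v S : ℝ) : EReal) ∧
    theta N v S = -S.1 - ∑ i, v i (S.2 i) :=
  stmt3_general N b pmax v v' hderiv hbound S hS

end
end

section
/- Suppose each value function v i is concave and increasing on [0, b i]. Then ρ is convex: for all bounded functions X, Y : Ω → ℝ and every λ ∈ [0, 1], ρ(λ X + (1 - λ) Y) ≤ λ ρ(X) + (1 - λ) ρ(Y) (with the usual conventions for +∞). -/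
open MeasureTheory

noncomputable section

/-! `ρ(X)` is the infimum of `θ` over the positions dominated by `X`. The return `X_S` is linear
in `S`, so a convex combination of a position dominated by `X` and one dominated by `Y` is
dominated by `λ X + (1 - λ) Y`; and `θ` is convex on positions because every `v i` is concave.
Taking infima gives the inequality. Boundedness of `X`, `Y` and monotonicity of the `v i` keep
`ρ(X)` and `ρ(Y)` above `-∞`, so the right-hand side never has to evaluate `⊥ + ⊤`; the endpoint
cases `λ ∈ {0, 1}` are separate because `0 * ⊤ = 0` in `EReal`. -/

open Set Pointwise

lemma le_mul_csInf_add_mul_csInf {s t : Set ℝ} {a l m : ℝ} (hl : 0 ≤ l) (hm : 0 ≤ m)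
    (hs : s.Nonempty) (hs' : BddBelow s) (ht : t.Nonempty) (ht' : BddBelow t)
    (h : ∀ x ∈ s, ∀ y ∈ t, a ≤ l * x + m * y) :
    a ≤ l * sInf s + m * sInf t := by
  have hinf : sInf (l • s + m • t) = l * sInf s + m * sInf t := by
    rw [csInf_add (hs.smul_set) (hs'.smul_of_nonneg hl) (ht.smul_set) (ht'.smul_of_nonneg hm),
      Real.sInf_smul_of_nonneg hl, Real.sInf_smul_of_nonneg hm, smul_eq_mul, smul_eq_mul]
  rw [← hinf]
  refine le_csInf (hs.smul_set.add ht.smul_set) ?_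
  rintro _ ⟨_, ⟨x, hx, rfl⟩, _, ⟨y, hy, rfl⟩, rfl⟩
  exact h x hx y hy

namespace EReal

lemma sInf_coe_image {s : Set ℝ} (hs : s.Nonempty) (hs' : BddBelow s) :
    sInf ((↑) '' s : Set EReal) = ↑(sInf s) :=
  (Monotone.map_csInf_of_continuousAt continuous_coe_real_ereal.continuousAt
    (fun _ _ => EReal.coe_le_coe) hs hs').symm

lemma sInf_coe_image_ne_bot {s : Set ℝ} (hs : BddBelow s) : sInf ((↑) '' s : Set EReal) ≠ ⊥ := by
  obtain ⟨r, hr⟩ := hs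
  refine ne_bot_of_le_ne_bot (coe_ne_bot r) (le_sInf ?_)
  rintro _ ⟨x, hx, rfl⟩
  exact EReal.coe_le_coe (hr hx)

lemma coe_mul_sInf_coe_image_ne_bot {s : Set ℝ} {l : ℝ} (hl : 0 < l) (hs : BddBelow s) :
    (l : EReal) * sInf ((↑) '' s) ≠ ⊥ :=
  (mul_ne_bot _ _).2 ⟨.inl (coe_ne_bot l), .inr (sInf_coe_image_ne_bot hs), .inl (coe_ne_top l),
    .inl (EReal.coe_nonneg.2 hl.le)⟩

lemma le_coe_mul_sInf_add_coe_mul_sInf {s t : Set ℝ} {a : EReal} {l m : ℝ} (hl : 0 < l)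
    (hm : 0 < m) (hs : BddBelow s) (ht : BddBelow t)
    (h : ∀ x ∈ s, ∀ y ∈ t, a ≤ ↑(l * x + m * y)) :
    a ≤ l * sInf ((↑) '' s) + m * sInf ((↑) '' t) := by
  rcases s.eq_empty_or_nonempty with rfl | hs₀
  · rw [image_empty, sInf_empty, coe_mul_top_of_pos hl,
      top_add_of_ne_bot (coe_mul_sInf_coe_image_ne_bot hm ht)]
    exact le_top
  rcases t.eq_empty_or_nonempty with rfl | ht₀
  · rw [image_empty, sInf_empty, coe_mul_top_of_pos hm,
      add_top_of_ne_bot (coe_mul_sInf_coe_image_ne_bot hl hs)]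
    exact le_top
  rw [sInf_coe_image hs₀ hs, sInf_coe_image ht₀ ht, ← coe_mul, ← coe_mul, ← coe_add]
  induction a using EReal.rec with
  | bot => exact bot_le
  | top =>
    obtain ⟨x, hx⟩ := hs₀
    obtain ⟨y, hy⟩ := ht₀
    exact absurd (h x hx y hy) (coe_lt_top _).not_ge
  | coe a =>
    exact EReal.coe_le_coe <| le_mul_csInf_add_mul_csInf hl.le hm.le hs₀ hs ht₀ ht
      fun x hx y hy => EReal.coe_le_coe_iff.1 (h x hx y hy)

end EReal

section Positions

variable {N : ℕ} {b : Fin N → ℝ} {pmax : ℝ} {v : Fin N → ℝ → ℝ}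

def dominatedPositions (N : ℕ) (b : Fin N → ℝ) (pmax : ℝ) (X : Omega N pmax → ℝ) :
    Set (ℝ × (Fin N → ℝ)) :=
  {S | IsPosition N b S ∧ ∀ p, ret N pmax S p ≤ X p}

lemma rho_eq_sInf_image (X : Omega N pmax → ℝ) :
    rho N b pmax v X = sInf ((↑) '' (theta N v '' dominatedPositions N b pmax X)) := by
  rw [rho, image_image]
  congr 1
  ext t
  simp [dominatedPositions, and_assoc, @eq_comm _ t]

lemma isPosition_iff {S : ℝ × (Fin N → ℝ)} : IsPosition N b S ↔ S ∈ Ici 0 ×ˢ Icc 0 b := by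
  simp [IsPosition, Pi.le_def, forall_and]

lemma convex_setOf_isPosition : Convex ℝ {S | IsPosition N b S} := by
  simpa only [isPosition_iff, ofPred_mem_eq] using (convex_Ici 0).prod (convex_Icc 0 b)

lemma ret_smul_add_smul (a c : ℝ) (S T : ℝ × (Fin N → ℝ)) (p : Omega N pmax) :
    ret N pmax (a • S + c • T) p = a * ret N pmax S p + c * ret N pmax T p := by
  simp only [ret, Prod.fst_add, Prod.snd_add, Prod.smul_fst, Prod.smul_snd, Pi.add_apply,
    Pi.smul_apply, smul_eq_mul, mul_add, Finset.sum_add_distrib, Finset.mul_sum, mul_left_comm]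
  ring

lemma smul_add_smul_mem_dominatedPositions {X Y : Omega N pmax → ℝ} {S T : ℝ × (Fin N → ℝ)}
    (hS : S ∈ dominatedPositions N b pmax X) (hT : T ∈ dominatedPositions N b pmax Y)
    {a c : ℝ} (ha : 0 ≤ a) (hc : 0 ≤ c) (hac : a + c = 1) :
    a • S + c • T ∈ dominatedPositions N b pmax (fun p => a * X p + c * Y p) := by
  refine ⟨convex_setOf_isPosition hS.1 hT.1 ha hc hac, fun p => ?_⟩
  rw [ret_smul_add_smul]
  exact add_le_add (mul_le_mul_of_nonneg_left (hS.2 p) ha) (mul_le_mul_of_nonneg_left (hT.2 p) hc)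

lemma convexOn_theta (hconc : ∀ i, ConcaveOn ℝ (Icc 0 (b i)) (v i)) :
    ConvexOn ℝ {S | IsPosition N b S} (theta N v) := by
  refine ⟨convex_setOf_isPosition, fun S hS T hT a c ha hc hac => ?_⟩
  have hv : ∀ i, a * v i (S.2 i) + c * v i (T.2 i) ≤ v i (a * S.2 i + c * T.2 i) := fun i =>
    (hconc i).2 (hS.2 i) (hT.2 i) ha hc hac
  have hsum := Finset.sum_le_sum fun i (_ : i ∈ Finset.univ) => hv i
  simp only [Finset.sum_add_distrib, ← Finset.mul_sum] at hsum
  simp only [theta, Prod.fst_add, Prod.snd_add, Prod.smul_fst, Prod.smul_snd, Pi.add_apply,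
    Pi.smul_apply, smul_eq_mul]
  linarith

lemma bddBelow_theta_image [Nonempty (Omega N pmax)]
    (hmono : ∀ i, MonotoneOn (v i) (Icc 0 (b i))) {X : Omega N pmax → ℝ}
    (hX : BddAbove (range X)) :
    BddBelow (theta N v '' dominatedPositions N b pmax X) := by
  obtain ⟨C, hC⟩ := hX
  obtain ⟨p⟩ := ‹Nonempty (Omega N pmax)›
  refine ⟨-C - ∑ i, v i (b i), ?_⟩
  rintro _ ⟨S, ⟨hS, hSX⟩, rfl⟩
  have hw : S.1 ≤ C := by
    have hret : 0 ≤ ∑ i, p.1 i * S.2 i :=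
      Finset.sum_nonneg fun i _ => mul_nonneg (p.2 i).1 (hS.2 i).1
    have := (hSX p).trans (hC (mem_range_self p))
    rw [ret] at this
    linarith
  have hv : ∑ i, v i (S.2 i) ≤ ∑ i, v i (b i) := Finset.sum_le_sum fun i _ =>
    hmono i (hS.2 i) ⟨(hS.2 i).1.trans (hS.2 i).2, le_rfl⟩ (hS.2 i).2
  rw [theta]
  linarith

lemma Bounded.bddAbove {X : Omega N pmax → ℝ} (hX : Bounded N pmax X) : BddAbove (range X) := by
  obtain ⟨C, hC⟩ := hX
  exact ⟨C, forall_mem_range.2 fun p => (abs_le.1 (hC p)).2⟩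

end Positions

theorem stmt4_general (N : ℕ) (b : Fin N → ℝ)
    (pmax : ℝ) (hpmax : 0 < pmax) (v : Fin N → ℝ → ℝ)
    (hconc : ∀ i, ConcaveOn ℝ (Set.Icc (0:ℝ) (b i)) (v i))
    (hmono : ∀ i, MonotoneOn (v i) (Set.Icc (0:ℝ) (b i)))
    (X Y : Omega N pmax → ℝ)
    (hX : Bounded N pmax X) (hY : Bounded N pmax Y)
    (l : ℝ) (hl : l ∈ Set.Icc (0:ℝ) 1) :
    rho N b pmax v (fun p => l * X p + (1 - l) * Y p) ≤
      ((l : ℝ) : EReal) * rho N b pmax v X +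
        ((1 - l : ℝ) : EReal) * rho N b pmax v Y := by
  obtain ⟨hl0, hl1⟩ := hl
  rcases hl0.eq_or_lt with rfl | hl0
  · simp
  rcases hl1.eq_or_lt with rfl | hl1
  · simp
  have hl1' : 0 < 1 - l := sub_pos.2 hl1
  have : Nonempty (Omega N pmax) := ⟨⟨0, fun _ => ⟨le_rfl, hpmax.le⟩⟩⟩
  simp only [rho_eq_sInf_image]
  refine EReal.le_coe_mul_sInf_add_coe_mul_sInf hl0 hl1'
    (bddBelow_theta_image hmono hX.bddAbove) (bddBelow_theta_image hmono hY.bddAbove) ?_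
  rintro _ ⟨S, hS, rfl⟩ _ ⟨T, hT, rfl⟩
  calc sInf _ ≤ ((theta N v (l • S + (1 - l) • T) : ℝ) : EReal) :=
        sInf_le <| mem_image_of_mem _ <| mem_image_of_mem _ <|
          smul_add_smul_mem_dominatedPositions hS hT hl0.le hl1'.le (by ring)
    _ ≤ _ := EReal.coe_le_coe <|
        (convexOn_theta hconc).2 hS.1 hT.1 hl0.le hl1'.le (by ring)

/-- if the value functions are concave and increasing on `[0, b i]`,
then `ρ` is convex. -/
theorem stmt4 (N : ℕ) (hN : 1 ≤ N) (b : Fin N → ℝ) (hb : ∀ i, 0 < b i)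
    (pmax : ℝ) (hpmax : 0 < pmax) (v : Fin N → ℝ → ℝ)
    (hconc : ∀ i, ConcaveOn ℝ (Set.Icc (0:ℝ) (b i)) (v i))
    (hmono : ∀ i, MonotoneOn (v i) (Set.Icc (0:ℝ) (b i)))
    (X Y : Omega N pmax → ℝ)
    (hX : Bounded N pmax X) (hY : Bounded N pmax Y)
    (l : ℝ) (hl : l ∈ Set.Icc (0:ℝ) 1) :
    rho N b pmax v (fun p => l * X p + (1 - l) * Y p) ≤
      ((l : ℝ) : EReal) * rho N b pmax v X +
        ((1 - l : ℝ) : EReal) * rho N b pmax v Y :=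
  stmt4_general N b pmax hpmax v hconc hmono X Y hX hY l hl
end
end

section
/- Suppose each value function v i is continuous on [0, b i]. Then ρ is continuous from above: if (X_n) is a sequence of bounded functions Ω → ℝ that decreases pointwise to a bounded function X (X_{n+1}(p) ≤ X_n(p) for all n, p and X_n(p) → X(p) for every p ∈ Ω), then the sequence ρ(X_n) is nondecreasing and converges to ρ(X) (in ℝ ∪ {+∞}). -/
open MeasureTheory

noncomputable section

/-- if the value functions are continuous on `[0, b i]`, then `ρ` is continuous
from above: along a pointwise decreasing sequence of bounded functions converging pointwise
to a bounded function, `ρ` is nondecreasing and converges to `ρ` of the limit. -/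
theorem stmt5 (N : ℕ) (hN : 1 ≤ N) (b : Fin N → ℝ) (hb : ∀ i, 0 < b i)
    (pmax : ℝ) (hpmax : 0 < pmax) (v : Fin N → ℝ → ℝ)
    (hv : ∀ i, ContinuousOn (v i) (Set.Icc (0:ℝ) (b i)))
    (X : ℕ → Omega N pmax → ℝ) (Xlim : Omega N pmax → ℝ)
    (hXb : ∀ n, Bounded N pmax (X n)) (hXlimb : Bounded N pmax Xlim)
    (hdec : ∀ n p, X (n + 1) p ≤ X n p)
    (hlim : ∀ p, Filter.Tendsto (fun n => X n p) Filter.atTop (nhds (Xlim p))) :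
    Monotone (fun n => rho N b pmax v (X n)) ∧
    Filter.Tendsto (fun n => rho N b pmax v (X n)) Filter.atTop
      (nhds (rho N b pmax v Xlim)) := by
  classical
  have hanti : ∀ p, Antitone (fun n => X n p) := fun p =>
    antitone_nat_of_succ_le (fun n => hdec n p)
  have hXle : ∀ n p, Xlim p ≤ X n p := fun n p => (hanti p).le_of_tendsto (hlim p) n
  -- monotonicity of rho along the sequence
  have hsub : ∀ {Y Z : Omega N pmax → ℝ}, (∀ p, Y p ≤ Z p) →
      rho N b pmax v Z ≤ rho N b pmax v Y := by
    intro Y Z hYZ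
    apply sInf_le_sInf
    rintro t ⟨S, hS, hret, rfl⟩
    exact ⟨S, hS, fun p => (hret p).trans (hYZ p), rfl⟩
  have hmono : Monotone (fun n => rho N b pmax v (X n)) := by
    intro m n hmn
    exact hsub (fun p => hanti p hmn)
  refine ⟨hmono, ?_⟩
  have hle : ∀ n, rho N b pmax v (X n) ≤ rho N b pmax v Xlim :=
    fun n => hsub (fun p => hXle n p)
  have hsupeq : (⨆ n, rho N b pmax v (X n)) = rho N b pmax v Xlim := by
    refine le_antisymm (iSup_le hle) ?_
    by_contra hcon
    push_neg at hcon
    obtain ⟨t, htL, htρ⟩ := EReal.exists_between_coe_real hcon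
    -- pick near-optimal positions
    have hex : ∀ n, ∃ S : ℝ × (Fin N → ℝ), IsPosition N b S ∧
        (∀ p, ret N pmax S p ≤ X n p) ∧ theta N v S < t := by
      intro n
      have hlt : rho N b pmax v (X n) < (t : EReal) :=
        (le_iSup (fun n => rho N b pmax v (X n)) n).trans_lt htL
      rw [rho, sInf_lt_iff] at hlt
      obtain ⟨a, ⟨S, hS, hret, rfl⟩, halt⟩ := hlt
      exact ⟨S, hS, hret, by exact_mod_cast halt⟩
    choose S hS1 hS2 hS3 using hex
    obtain ⟨C0, hC0⟩ := hXb 0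
    set K : Set (ℝ × (Fin N → ℝ)) :=
      Set.Icc (0:ℝ) C0 ×ˢ Set.Icc (0 : Fin N → ℝ) b with hKdef
    have hKcomp : IsCompact K := isCompact_Icc.prod isCompact_Icc
    set p0 : Omega N pmax := ⟨fun _ => 0, fun i => ⟨le_refl 0, hpmax.le⟩⟩ with hp0
    have hKmem : ∀ n, S n ∈ K := by
      intro n
      have hw : (S n).1 ≤ C0 := by
        have h1 : ret N pmax (S n) p0 = (S n).1 := by
          simp [ret, hp0]
        have h2 := hS2 n p0
        rw [h1] at h2
        exact h2.trans ((hanti p0 (Nat.zero_le n)).trans ((le_abs_self _).trans (hC0 p0)))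
      exact ⟨⟨(hS1 n).1, hw⟩, ⟨fun i => (hS1 n).2 i |>.1, fun i => (hS1 n).2 i |>.2⟩⟩
    obtain ⟨a, haK, φ, hφ, htend⟩ := hKcomp.tendsto_subseq hKmem
    -- a is a position
    have haPos : IsPosition N b a :=
      ⟨haK.1.1, fun i => ⟨haK.2.1 i, haK.2.2 i⟩⟩
    -- ret of a bounded by Xlim
    have hretcont : ∀ p : Omega N pmax, Continuous (fun S : ℝ × (Fin N → ℝ) =>
        ret N pmax S p) := by
      intro p
      unfold ret
      exact continuous_fst.add (continuous_finset_sum _ fun i _ =>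
        continuous_const.mul ((continuous_apply i).comp continuous_snd))
    have haret : ∀ p, ret N pmax a p ≤ Xlim p := by
      intro p
      have hm : ∀ m, ret N pmax a p ≤ X m p := by
        intro m
        have h1 : Filter.Tendsto (fun k => ret N pmax ((S ∘ φ) k) p)
            Filter.atTop (nhds (ret N pmax a p)) :=
          ((hretcont p).tendsto a).comp htend
        refine le_of_tendsto h1 ?_
        filter_upwards [Filter.eventually_ge_atTop m] with k hk
        calc ret N pmax (S (φ k)) p ≤ X (φ k) p := hS2 (φ k) p
          _ ≤ X m p := hanti p (hk.trans (hφ.le_apply))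
      exact ge_of_tendsto (hlim p) (Filter.Eventually.of_forall hm)
    -- theta is continuous on K
    have hθcont : ContinuousOn (theta N v) K := by
      unfold theta
      apply ContinuousOn.sub (continuousOn_fst.neg)
      apply continuousOn_finset_sum
      intro i _
      exact (hv i).comp (((continuous_apply i).comp continuous_snd).continuousOn)
        (fun S hS => ⟨hS.2.1 i, hS.2.2 i⟩)
    have hθa : theta N v a ≤ t := by
      have htendK : Filter.Tendsto (S ∘ φ) Filter.atTop (nhdsWithin a K) :=
        tendsto_nhdsWithin_of_tendsto_nhds_of_eventually_within _ htend
          (Filter.Eventually.of_forall fun k => hKmem (φ k))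
      have h1 : Filter.Tendsto (fun k => theta N v ((S ∘ φ) k)) Filter.atTop
          (nhds (theta N v a)) := ((hθcont a haK).tendsto).comp htendK
      exact le_of_tendsto h1 (Filter.Eventually.of_forall fun k => (hS3 (φ k)).le)
    have : rho N b pmax v Xlim ≤ (t : EReal) := by
      refine le_trans (sInf_le ⟨a, haPos, haret, rfl⟩) ?_
      exact_mod_cast hθa
    exact absurd (this.trans_lt htρ) (lt_irrefl _)
  have := tendsto_atTop_iSup hmono
  rwa [hsupeq] at this
end
end

section
/- For every probability measure Q on Ω, the penalty α(Q), defined as the supremum over all bounded measurable X : Ω → ℝ of ( ∫ (-X) dQ - ρ(X) ), is equal to the supremum taken only over return functions of positions: α(Q) = sup over positions S of ( ∫ (-X_S) dQ - ρ(X_S) ). -/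
/-!
Every position `S` with `X_S ≤ X` gives `∫ -X dQ - θ(S) ≤ ∫ -X_S dQ - ρ(X_S)`, because
`-X ≤ -X_S` and `S` itself is admissible in the infimum defining `ρ(X_S)`. Since `ρ(X)` is the
infimum of these `θ(S)`, the supremum over positions dominates every term of `α(Q)`; conversely,
return functions are themselves bounded and measurable.
-/

open MeasureTheory

noncomputable section

/-- Penalty function `α(Q) = sup over bounded measurable X of (∫ (-X) dQ - ρ(X))`. -/
def alphaPen (N : ℕ) (b : Fin N → ℝ) (pmax : ℝ) (v : Fin N → ℝ → ℝ)
    (Q : Measure (Omega N pmax)) : EReal :=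
  ⨆ X ∈ {X : Omega N pmax → ℝ | Measurable X ∧ Bounded N pmax X},
    (((∫ p, -X p ∂Q : ℝ) : EReal) - rho N b pmax v X)

namespace EReal

theorem sub_sInf_le {a R : EReal} {A : Set EReal} (h : ∀ t ∈ A, a - t ≤ R) :
    a - sInf A ≤ R := by
  refine add_le_of_forall_lt fun a' ha' b' hb' => ?_
  obtain ⟨t, htA, htb⟩ := sInf_lt_iff.1 (EReal.lt_neg_comm.1 hb')
  calc a' + b' ≤ a + -t := add_le_add ha'.le (EReal.lt_neg_comm.2 htb).le
    _ ≤ R := h t htA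

end EReal

theorem Bounded.integrable {N : ℕ} {pmax : ℝ} {X : Omega N pmax → ℝ} (hXm : Measurable X)
    (hXb : Bounded N pmax X) (Q : Measure (Omega N pmax)) [IsFiniteMeasure Q] :
    Integrable X Q := by
  obtain ⟨C, hC⟩ := hXb
  exact Integrable.of_bound hXm.aestronglyMeasurable C (ae_of_all _ hC)

theorem measurable_ret (N : ℕ) (pmax : ℝ) (S : ℝ × (Fin N → ℝ)) :
    Measurable (ret N pmax S) :=
  measurable_const.add <| Finset.measurable_sum _ fun i _ =>
    ((measurable_pi_apply i).comp measurable_subtype_coe).mul_const _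

theorem bounded_ret (N : ℕ) (pmax : ℝ) (S : ℝ × (Fin N → ℝ)) :
    Bounded N pmax (ret N pmax S) := by
  refine ⟨|S.1| + ∑ i, pmax * |S.2 i|, fun p => ?_⟩
  have hp : ∀ i, |p.1 i| ≤ pmax := fun i => (abs_of_nonneg (p.2 i).1).trans_le (p.2 i).2
  calc |ret N pmax S p| ≤ |S.1| + ∑ i, |p.1 i * S.2 i| :=
        (abs_add_le _ _).trans (add_le_add le_rfl (Finset.abs_sum_le_sum_abs _ _))
    _ ≤ |S.1| + ∑ i, pmax * |S.2 i| := by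
        gcongr with i
        rw [abs_mul]
        exact mul_le_mul_of_nonneg_right (hp i) (abs_nonneg _)

theorem rho_ret_le_theta {N : ℕ} {b : Fin N → ℝ} {pmax : ℝ} (v : Fin N → ℝ → ℝ)
    {S : ℝ × (Fin N → ℝ)} (hS : IsPosition N b S) :
    rho N b pmax v (ret N pmax S) ≤ (theta N v S : EReal) :=
  sInf_le ⟨S, hS, fun _ => le_rfl, rfl⟩

theorem integral_neg_sub_theta_le {N : ℕ} {b : Fin N → ℝ} {pmax : ℝ} (v : Fin N → ℝ → ℝ)
    (Q : Measure (Omega N pmax)) [IsFiniteMeasure Q] {X : Omega N pmax → ℝ}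
    (hXm : Measurable X) (hXb : Bounded N pmax X) {S : ℝ × (Fin N → ℝ)}
    (hS : IsPosition N b S) (hSX : ∀ p, ret N pmax S p ≤ X p) :
    ((∫ p, -X p ∂Q : ℝ) : EReal) - theta N v S ≤
      ((∫ p, -ret N pmax S p ∂Q : ℝ) : EReal) - rho N b pmax v (ret N pmax S) := by
  have hint : ∫ p, -X p ∂Q ≤ ∫ p, -ret N pmax S p ∂Q :=
    integral_mono (hXb.integrable hXm Q).neg
      ((bounded_ret N pmax S).integrable (measurable_ret N pmax S) Q).neg
      fun p => neg_le_neg (hSX p)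
  exact EReal.sub_le_sub (EReal.coe_le_coe_iff.2 hint) (rho_ret_le_theta v hS)

theorem stmt7_general (N : ℕ) (b : Fin N → ℝ) (pmax : ℝ) (v : Fin N → ℝ → ℝ)
    (Q : Measure (Omega N pmax)) (hQ : IsProbabilityMeasure Q) :
    alphaPen N b pmax v Q =
      ⨆ S ∈ {S : ℝ × (Fin N → ℝ) | IsPosition N b S},
        (((∫ p, -(ret N pmax S p) ∂Q : ℝ) : EReal) - rho N b pmax v (ret N pmax S)) := by
  refine le_antisymm (iSup₂_le fun X ⟨hXm, hXb⟩ => ?_) (iSup₂_le fun S _ => ?_)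
  · refine EReal.sub_sInf_le ?_
    rintro _ ⟨S, hS, hSX, rfl⟩
    exact (integral_neg_sub_theta_le v Q hXm hXb hS hSX).trans <| le_iSup₂_of_le S hS le_rfl
  · exact le_iSup₂_of_le (ret N pmax S) ⟨measurable_ret N pmax S, bounded_ret N pmax S⟩ le_rfl

/-- the penalty `α(Q)` can equivalently be computed by taking the supremum
only over return functions of positions. -/
theorem stmt7 (N : ℕ) (hN : 1 ≤ N) (b : Fin N → ℝ) (hb : ∀ i, 0 < b i)
    (pmax : ℝ) (hpmax : 0 < pmax) (v : Fin N → ℝ → ℝ)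
    (Q : Measure (Omega N pmax)) (hQ : IsProbabilityMeasure Q) :
    alphaPen N b pmax v Q =
      ⨆ S ∈ {S : ℝ × (Fin N → ℝ) | IsPosition N b S},
        (((∫ p, -(ret N pmax S p) ∂Q : ℝ) : EReal) - rho N b pmax v (ret N pmax S)) :=
  stmt7_general N b pmax v Q hQ
end
end

section
/- Logarithmic penalty formula: let N ≥ 1, γ > 0, budgets b i > 0, and reals pε i, p* i for each i ∈ Fin N. Then sup over s with 0 < s i ≤ b i for all i of ∑ i, ( pε i · s i + γ·log(s i / b i) - p* i · s i ) = ∑ i, |pε i · b i - p* i · b i|_γ, where |x|_γ = x if x ≥ -γ and |x|_γ = -γ + γ·log(γ / (-x)) if x < -γ. -/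
/-!
The objective separates over the coordinates, so the supremum is the sum of the one-dimensional
suprema. After the substitution `s = t * b` each of these is the maximum of `x * t + γ * log t`
over `t ∈ (0, 1]`, where `x = (pε - p*) * b`. This function is concave with critical point
`t = γ / (-x)`, which lies in `(0, 1]` exactly when `x ≤ -γ`; otherwise the maximum is at `t = 1`.
Both cases reduce to `log u ≤ u - 1`.
-/

open Real Set

/-- The paper's `|x|_γ`. -/
noncomputable def logPenalty (γ x : ℝ) : ℝ :=
  if -γ ≤ x then x else -γ + γ * log (γ / (-x))

lemma mul_add_mul_log_le_logPenalty {γ x t : ℝ} (hγ : 0 < γ) (ht : 0 < t) (ht₁ : t ≤ 1) :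
    x * t + γ * log t ≤ logPenalty γ x := by
  unfold logPenalty
  split_ifs with hx
  · have hlog : γ * log t ≤ γ * (t - 1) := by gcongr; exact log_le_sub_one_of_pos ht
    nlinarith
  · have hx' : 0 < -x := by linarith
    have hx0 : x ≠ 0 := by linarith
    have hu : 0 < -x * t / γ := by positivity
    have hsplit : log t = log (-x * t / γ) + log (γ / (-x)) := by
      rw [← log_mul hu.ne' (by positivity)]
      congr 1
      field_simp
    have hlog : γ * log (-x * t / γ) ≤ γ * (-x * t / γ - 1) := by
      gcongr; exact log_le_sub_one_of_pos hu
    have hγu : γ * (-x * t / γ - 1) = -x * t - γ := by field_simp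
    rw [hsplit]
    linarith

lemma isGreatest_logPenalty {γ : ℝ} (hγ : 0 < γ) (x : ℝ) :
    IsGreatest ((fun t => x * t + γ * log t) '' Ioc 0 1) (logPenalty γ x) := by
  refine ⟨?_, forall_mem_image.2 fun t ht => mul_add_mul_log_le_logPenalty hγ ht.1 ht.2⟩
  by_cases hx : -γ ≤ x
  · exact ⟨1, ⟨one_pos, le_rfl⟩, by simp [logPenalty, hx]⟩
  · have hx' : 0 < -x := by linarith
    have hx0 : x ≠ 0 := by linarith
    refine ⟨γ / (-x), ⟨by positivity, (div_le_one hx').2 (by linarith)⟩, ?_⟩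
    simp only [logPenalty, hx, if_false]
    field_simp

lemma isGreatest_mul_add_mul_log_div {γ b : ℝ} (hγ : 0 < γ) (hb : 0 < b) (c : ℝ) :
    IsGreatest ((fun s => c * s + γ * log (s / b)) '' Ioc 0 b) (logPenalty γ (c * b)) := by
  have hIoc : Ioc 0 b = (fun t => t * b) '' Ioc 0 1 := by
    rw [image_mul_right_Ioc _ _ hb, zero_mul, one_mul]
  rw [hIoc, image_image]
  convert isGreatest_logPenalty hγ (c * b) using 1
  refine image_congr fun t _ => ?_
  rw [mul_div_cancel_right₀ _ hb.ne']
  ring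

lemma isGreatest_sum_image_pi {ι α β : Type*} [Fintype ι] [AddCommMonoid β] [PartialOrder β]
    [IsOrderedAddMonoid β] {S : ι → Set α} {f : ι → α → β} {M : ι → β}
    (h : ∀ i, IsGreatest (f i '' S i) (M i)) :
    IsGreatest ((fun s => ∑ i, f i (s i)) '' univ.pi S) (∑ i, M i) := by
  choose s hs hsM using fun i => (h i).1
  refine ⟨⟨s, fun i _ => hs i, Finset.sum_congr rfl fun i _ => hsM i⟩, ?_⟩
  rintro _ ⟨t, ht, rfl⟩
  exact Finset.sum_le_sum fun i _ => (h i).2 ⟨t i, ht i (mem_univ i), rfl⟩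

theorem stmt13_general (N : ℕ) (γ : ℝ) (hγ : 0 < γ)
    (b pe ps : Fin N → ℝ) (hb : ∀ i, 0 < b i) :
    IsLUB
      {y : ℝ | ∃ s : Fin N → ℝ, (∀ i, 0 < s i ∧ s i ≤ b i) ∧
        y = ∑ i, (pe i * s i + γ * Real.log (s i / b i) - ps i * s i)}
      (∑ i, (fun x : ℝ => if -γ ≤ x then x else -γ + γ * Real.log (γ / (-x)))
        (pe i * b i - ps i * b i)) := by
  have hcoord : ∀ i, IsGreatest
      ((fun s => pe i * s + γ * log (s / b i) - ps i * s) '' Ioc 0 (b i))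
      (logPenalty γ (pe i * b i - ps i * b i)) := fun i => by
    convert isGreatest_mul_add_mul_log_div hγ (hb i) (pe i - ps i) using 2 <;> ring_nf
  change IsLUB _ (∑ i, logPenalty γ (pe i * b i - ps i * b i))
  convert (isGreatest_sum_image_pi hcoord).isLUB using 1
  · rfl
  · ext y
    simp [eq_comm]

/-- logarithmic penalty formula. The supremum, over `s` with `0 < s i ≤ b i`,
of `∑ i, (pε i · s i + γ·log(s i / b i) - p* i · s i)` equals
`∑ i, |pε i · b i - p* i · b i|_γ`, where `|x|_γ = x` if `x ≥ -γ` and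
`|x|_γ = -γ + γ·log(γ/(-x))` otherwise. -/
theorem stmt13 (N : ℕ) (hN : 1 ≤ N) (γ : ℝ) (hγ : 0 < γ)
    (b pe ps : Fin N → ℝ) (hb : ∀ i, 0 < b i) :
    IsLUB
      {y : ℝ | ∃ s : Fin N → ℝ, (∀ i, 0 < s i ∧ s i ≤ b i) ∧
        y = ∑ i, (pe i * s i + γ * Real.log (s i / b i) - ps i * s i)}
      (∑ i, (fun x : ℝ => if -γ ≤ x then x else -γ + γ * Real.log (γ / (-x)))
        (pe i * b i - ps i * b i)) :=
  stmt13_general N γ hγ b pe ps hb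
end

section
/- First-order optimality condition for the single-impression risk minimization: fix N ≥ 1, and for each i ∈ Fin N reals r i, a i > 0, c i ≥ 0, b i > 0 with c i ≤ b i, and a value function v i : ℝ → ℝ that is concave and differentiable. Consider maximizing F(x) = ∑ i, ( r i * x i + v i (b i - c i - a i * x i) ) over x : Fin N → ℝ subject to x i ≥ 0 for all i, ∑ i, x i ≤ 1, and b i - c i - a i * x i ≥ 0 for all i. If x* is a maximizer, i ∈ Fin N satisfies x* i > 0, and k ∈ Fin N satisfies b k - c k - a k * x* k > 0, then r i - a i * v i'(b i - c i - a i * x* i) ≥ r k - a k * v k'(b k - c k - a k * x* k). -/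
/-!
Shifting an amount `t ≥ 0` of the impression from `i` to `k` keeps the allocation feasible
for small `t`, because `x* i > 0` and the budget of `k` is slack. Hence the right derivative
of the objective along this direction is `≤ 0` at the maximizer, and by the chain rule that
derivative is the difference of the dual-adjusted bids of `k` and `i`.
-/

open Set Filter Topology

theorem IsLocalMaxOn.hasDerivAt_nonpos_of_Ici {f : ℝ → ℝ} {f' a : ℝ}
    (h : IsLocalMaxOn f (Ici a) a) (hf : HasDerivAt f f' a) : f' ≤ 0 := by
  have hone : (1 : ℝ) ∈ posTangentConeAt (Ici a) a :=
    one_mem_posTangentConeAt_iff_frequently.2 <|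
      (eventually_nhdsWithin_of_forall fun x (hx : x ∈ Ioi a) => mem_Ici.2 hx.le).frequently
  simpa using h.hasFDerivWithinAt_nonpos hf.hasFDerivAt.hasFDerivWithinAt hone

section Allocation

variable {ι : Type*} [Fintype ι] (r a c b : ι → ℝ) (v : ι → ℝ → ℝ)

def allocationValue (x : ι → ℝ) : ℝ := ∑ j, (r j * x j + v j (b j - c j - a j * x j))

def FeasibleAllocation (x : ι → ℝ) : Prop :=
  (∀ j, 0 ≤ x j) ∧ (∑ j, x j ≤ 1) ∧ ∀ j, 0 ≤ b j - c j - a j * x j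

theorem hasDerivAt_allocationValue_add_smul (x d : ι → ℝ)
    (hv : ∀ j, DifferentiableAt ℝ (v j) (b j - c j - a j * x j)) :
    HasDerivAt (fun t : ℝ => allocationValue r a c b v (x + t • d))
      (∑ j, (r j - a j * deriv (v j) (b j - c j - a j * x j)) * d j) 0 := by
  refine HasDerivAt.fun_sum fun j _ => ?_
  have hline : HasDerivAt (fun t : ℝ => x j + t * d j) (d j) 0 := by
    simpa using ((hasDerivAt_id (0 : ℝ)).mul_const (d j)).const_add (x j)
  have hbudget : HasDerivAt (fun t : ℝ => b j - c j - a j * (x j + t * d j)) (-(a j * d j)) 0 :=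
    (hline.const_mul (a j)).const_sub (b j - c j)
  have hvalue := (hv j).hasDerivAt.comp_of_eq 0 hbudget (by simp)
  convert (hline.const_mul (r j)).add hvalue using 1
  · rfl
  · ring

variable [DecidableEq ι]

theorem sum_mul_transfer (g : ι → ℝ) (i k : ι) :
    ∑ j, g j * (Pi.single k 1 - Pi.single i 1 : ι → ℝ) j = g k - g i := by
  simp [mul_sub, Finset.sum_sub_distrib, Pi.single_apply]

theorem FeasibleAllocation.add_smul_transfer {x : ι → ℝ} (hx : FeasibleAllocation a c b x)
    {i k : ι} (hik : i ≠ k) (hai : 0 ≤ a i) {t : ℝ} (ht : 0 ≤ t) (hti : t ≤ x i)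
    (htk : a k * t ≤ b k - c k - a k * x k) :
    FeasibleAllocation a c b (x + t • (Pi.single k 1 - Pi.single i 1)) := by
  obtain ⟨hx0, hsum, hbudget⟩ := hx
  have hcoord : ∀ j, (x + t • (Pi.single k 1 - Pi.single i 1) : ι → ℝ) j =
      x j + (if j = k then t else 0) - (if j = i then t else 0) := by
    intro j
    simp only [Pi.add_apply, Pi.smul_apply, Pi.sub_apply, Pi.single_apply, smul_eq_mul]
    split_ifs <;> ring
  refine ⟨fun j => ?_, ?_, fun j => ?_⟩
  · rw [hcoord]
    split_ifs with hjk hji <;> subst_vars <;> linarith [hx0 j]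
  · simpa [hcoord, Finset.sum_add_distrib, Finset.sum_sub_distrib] using hsum
  · have := hbudget j
    rw [hcoord]
    split_ifs with hjk hji <;> subst_vars <;> nlinarith

end Allocation

theorem stmt17_general (N : ℕ)
    (r a c b : Fin N → ℝ)
    (ha : ∀ i, 0 < a i)
    (v : Fin N → ℝ → ℝ)
    (hdiff : ∀ i, Differentiable ℝ (v i))
    (xs : Fin N → ℝ)
    (hfeas : (∀ i, 0 ≤ xs i) ∧ (∑ i, xs i ≤ 1) ∧ ∀ i, 0 ≤ b i - c i - a i * xs i)
    (hmax : ∀ x : Fin N → ℝ, (∀ i, 0 ≤ x i) → (∑ i, x i ≤ 1) →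
      (∀ i, 0 ≤ b i - c i - a i * x i) →
      ∑ i, (r i * x i + v i (b i - c i - a i * x i)) ≤
        ∑ i, (r i * xs i + v i (b i - c i - a i * xs i)))
    (i k : Fin N) (hi : 0 < xs i) (hk : 0 < b k - c k - a k * xs k) :
    r k - a k * deriv (v k) (b k - c k - a k * xs k) ≤
      r i - a i * deriv (v i) (b i - c i - a i * xs i) := by
  rcases eq_or_ne i k with rfl | hik
  · exact le_rfl
  set d : Fin N → ℝ := Pi.single k 1 - Pi.single i 1
  have hε : 0 < min (xs i) ((b k - c k - a k * xs k) / a k) := lt_min hi (div_pos hk (ha k))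
  have hlocalMax :
      IsLocalMaxOn (fun t : ℝ => allocationValue r a c b v (xs + t • d)) (Ici 0) 0 := by
    filter_upwards [Icc_mem_nhdsGE hε] with t ⟨ht0, htε⟩
    have htk : a k * t ≤ b k - c k - a k * xs k := by
      rw [mul_comm, ← le_div_iff₀ (ha k)]
      exact htε.trans (min_le_right _ _)
    obtain ⟨hx0, hsum, hbudget⟩ := FeasibleAllocation.add_smul_transfer a c b hfeas hik
      (ha i).le ht0 (htε.trans (min_le_left _ _)) htk
    simp only [zero_smul, add_zero]
    exact hmax _ hx0 hsum hbudget
  have hslope := hlocalMax.hasDerivAt_nonpos_of_Ici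
    (hasDerivAt_allocationValue_add_smul r a c b v xs d fun j => (hdiff j).differentiableAt)
  rw [sum_mul_transfer] at hslope
  linarith

/-- first-order optimality condition for the single-impression risk
minimization. At a maximizer `x*` of
`F(x) = ∑ i, (r i * x i + v i (b i - c i - a i * x i))` over the feasible set, if
`x* i > 0` and the budget constraint of `k` is slack, then the dual-adjusted bid of `i`
dominates that of `k`. -/
theorem stmt17 (N : ℕ) (hN : 1 ≤ N)
    (r a c b : Fin N → ℝ)
    (hr : ∀ i, 0 < r i) (ha : ∀ i, 0 < a i) (hc : ∀ i, 0 ≤ c i)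
    (hb : ∀ i, 0 < b i) (hcb : ∀ i, c i ≤ b i)
    (v : Fin N → ℝ → ℝ)
    (hconc : ∀ i, ConcaveOn ℝ Set.univ (v i))
    (hdiff : ∀ i, Differentiable ℝ (v i))
    (xs : Fin N → ℝ)
    (hfeas : (∀ i, 0 ≤ xs i) ∧ (∑ i, xs i ≤ 1) ∧ ∀ i, 0 ≤ b i - c i - a i * xs i)
    (hmax : ∀ x : Fin N → ℝ, (∀ i, 0 ≤ x i) → (∑ i, x i ≤ 1) →
      (∀ i, 0 ≤ b i - c i - a i * x i) →
      ∑ i, (r i * x i + v i (b i - c i - a i * x i)) ≤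
        ∑ i, (r i * xs i + v i (b i - c i - a i * xs i)))
    (i k : Fin N) (hi : 0 < xs i) (hk : 0 < b k - c k - a k * xs k) :
    r k - a k * deriv (v k) (b k - c k - a k * xs k) ≤
      r i - a i * deriv (v i) (b i - c i - a i * xs i) :=
  stmt17_general N r a c b ha v hdiff xs hfeas hmax i k hi hk
end
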